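/- arXiv:2309.15791 — 6 statements merged into one kernel-verified Lean document; each statement's English description precedes it below -/
import Mathlib

section
/- For a regular maniplex M, the map ρ_i ↦ r_i extends to a group anti-isomorphism between the automorphism group of M and the monodromy group of M. -/
/-- A maniplex of rank `n`: a set of flags with fixed-point-free connection
involutions `r 0, …, r (n-1)` such that distinct colors give distinct
neighbors, non-consecutive connections commute, and the monodromy group they
generate acts transitively (connectivity). -/
structure Maniplex (n : ℕ) where
  V : Type
  r : Fin n → V → V
  invol : ∀ i v, r i (r i v) = v
  fpf : ∀ i v, r i v ≠ v
  adj_ne : ∀ (i j : Fin n) v, i ≠ j → r i v ≠ r j v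
  comm : ∀ (i j : Fin n) v, 1 < ((i : ℤ) - (j : ℤ)).natAbs →
    r i (r j (r i (r j v))) = v
  conn : ∀ u v : V, ∃ L : List (Fin n), L.foldl (fun w i => r i w) u = v

/-- The connection `r i` as a permutation of flags. -/
def rPerm {n : ℕ} (M : Maniplex n) (i : Fin n) : Equiv.Perm M.V :=
  Function.Involutive.toPerm (M.r i) (fun v => M.invol i v)

/-- A permutation of flags is an automorphism when it commutes with every
connection. -/
def IsAuto {n : ℕ} (M : Maniplex n) (α : Equiv.Perm M.V) : Prop :=
  ∀ (i : Fin n) (v : M.V), α (M.r i v) = M.r i (α v)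

/-- The automorphism group of `M`, as a subgroup of the permutations of its
flags. -/
def AutGrp {n : ℕ} (M : Maniplex n) : Subgroup (Equiv.Perm M.V) where
  carrier := {α | IsAuto M α}
  one_mem' := fun _ _ => rfl
  mul_mem' := by
    intro a b ha hb i v
    simp only [Equiv.Perm.mul_apply]
    rw [hb i v, ha i]
  inv_mem' := by
    intro a ha i v
    have h1 : a (M.r i (a⁻¹ v)) = M.r i v := by
      rw [ha i (a⁻¹ v)]
      simp
    calc a⁻¹ (M.r i v) = a⁻¹ (a (M.r i (a⁻¹ v))) := by rw [h1]
      _ = M.r i (a⁻¹ v) := by simp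

/-- The monodromy group of `M`: the subgroup of permutations of the flags
generated by the connections `r₀, …, r_{n-1}`. -/
def MonGrp {n : ℕ} (M : Maniplex n) : Subgroup (Equiv.Perm M.V) :=
  Subgroup.closure (Set.range (rPerm M))

lemma mon_comm {n : ℕ} {M : Maniplex n} {α : Equiv.Perm M.V} (hα : IsAuto M α)
    {w : Equiv.Perm M.V} (hw : w ∈ MonGrp M) : ∀ v, α (w v) = w (α v) := by
  have hle : MonGrp M ≤ Subgroup.centralizer {α} := by
    rw [MonGrp, Subgroup.closure_le]
    rintro _ ⟨i, rfl⟩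
    rw [SetLike.mem_coe, Subgroup.mem_centralizer_iff]
    rintro x rfl
    ext v
    exact hα i v
  have := Subgroup.mem_centralizer_iff.mp (hle hw) α rfl
  intro v
  calc α (w v) = (α * w) v := rfl
    _ = (w * α) v := by rw [this]
    _ = w (α v) := rfl

lemma mon_trans {n : ℕ} (M : Maniplex n) (u v : M.V) :
    ∃ w ∈ MonGrp M, w u = v := by
  obtain ⟨L, hL⟩ := M.conn u v
  subst hL
  induction L generalizing u with
  | nil => exact ⟨1, one_mem _, rfl⟩
  | cons i L ih =>
    obtain ⟨w, hw, hwu⟩ := ih (M.r i u)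
    refine ⟨w * rPerm M i, mul_mem hw (Subgroup.subset_closure ⟨i, rfl⟩), ?_⟩
    exact hwu

lemma mon_unique {n : ℕ} (M : Maniplex n)
    (hreg : ∀ Φ Ψ : M.V, ∃ α ∈ AutGrp M, α Φ = Ψ) (Φ : M.V)
    {w₁ w₂ : Equiv.Perm M.V} (h₁ : w₁ ∈ MonGrp M) (h₂ : w₂ ∈ MonGrp M)
    (h : w₁ Φ = w₂ Φ) : w₁ = w₂ := by
  ext v
  obtain ⟨α, hα, hαΦ⟩ := hreg Φ v
  calc w₁ v = w₁ (α Φ) := by rw [hαΦ]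
    _ = α (w₁ Φ) := (mon_comm hα h₁ Φ).symm
    _ = α (w₂ Φ) := by rw [h]
    _ = w₂ (α Φ) := mon_comm hα h₂ Φ
    _ = w₂ v := by rw [hαΦ]

/-- For a regular maniplex `M` with base flag `Φ`, the map `ρ_i ↦ r_i` (where
`ρ_i` is the unique automorphism sending `Φ` to `Φ r_i`) extends to a group
anti-isomorphism from the automorphism group of `M` to its monodromy group. -/
theorem stmt11 {n : ℕ} (M : Maniplex n)
    (hreg : ∀ Φ Ψ : M.V, ∃ α ∈ AutGrp M, α Φ = Ψ) (Φ : M.V) :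
    ∃ f : AutGrp M → MonGrp M, Function.Bijective f ∧
      (∀ a b : AutGrp M, f (a * b) = f b * f a) ∧
      (∀ (i : Fin n) (a : AutGrp M), (a : Equiv.Perm M.V) Φ = M.r i Φ →
        f a = ⟨rPerm M i, Subgroup.subset_closure (Set.mem_range_self i)⟩) := by
  have hex : ∀ a : AutGrp M, ∃ w ∈ MonGrp M, w Φ = (a : Equiv.Perm M.V) Φ :=
    fun a => mon_trans M Φ _
  choose g hg hgΦ using hex
  refine ⟨fun a => ⟨g a, hg a⟩, ?_, ?_, ?_⟩
  · constructor
    · intro a b hab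
      have h : g a = g b := congrArg Subtype.val hab
      have hΦ : (a : Equiv.Perm M.V) Φ = (b : Equiv.Perm M.V) Φ := by
        rw [← hgΦ a, ← hgΦ b, h]
      have : (a : Equiv.Perm M.V) = (b : Equiv.Perm M.V) := by
        ext v
        obtain ⟨w, hw, hwv⟩ := mon_trans M Φ v
        calc (a : Equiv.Perm M.V) v = (a : Equiv.Perm M.V) (w Φ) := by rw [hwv]
          _ = w ((a : Equiv.Perm M.V) Φ) := mon_comm a.2 hw Φ
          _ = w ((b : Equiv.Perm M.V) Φ) := by rw [hΦ]
          _ = (b : Equiv.Perm M.V) (w Φ) := (mon_comm b.2 hw Φ).symm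
          _ = (b : Equiv.Perm M.V) v := by rw [hwv]
      exact Subtype.ext this
    · rintro ⟨w, hw⟩
      obtain ⟨α, hα, hαΦ⟩ := hreg Φ (w Φ)
      refine ⟨⟨α, hα⟩, Subtype.ext ?_⟩
      exact mon_unique M hreg Φ (hg _) hw (by rw [hgΦ]; exact hαΦ)
  · intro a b
    refine Subtype.ext (mon_unique M hreg Φ (hg _) (mul_mem (hg b) (hg a)) ?_)
    calc g (a * b) Φ = ((a : Equiv.Perm M.V) * b) Φ := hgΦ _
      _ = (a : Equiv.Perm M.V) ((b : Equiv.Perm M.V) Φ) := rfl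
      _ = (a : Equiv.Perm M.V) (g b Φ) := by rw [hgΦ]
      _ = g b ((a : Equiv.Perm M.V) Φ) := mon_comm a.2 (hg b) Φ
      _ = g b (g a Φ) := by rw [hgΦ]
      _ = (g b * g a) Φ := rfl
  · intro i a ha
    refine Subtype.ext (mon_unique M hreg Φ (hg a)
      (Subgroup.subset_closure ⟨i, rfl⟩) ?_)
    rw [hgΦ, ha]; rfl
end

section
/- In the maniplex 2̂^M constructed from an n-maniplex M, removing all edges of color n yields one connected component for each vector x ∈ ℤ₂^{Fac(M)}, each component being isomorphic to M; in particular every facet of 2̂^M is isomorphic to M. -/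
/-- Two flags are in the same facet when they are connected by a word avoiding
the top color `n-1`. -/
def FacEq {n : ℕ} (M : Maniplex n) (Φ Ψ : M.V) : Prop :=
  ∃ L : List (Fin n), (∀ i ∈ L, (i : ℕ) + 1 ≠ n) ∧
    L.foldl (fun w i => M.r i w) Φ = Ψ

/-- The facets of `M`: connected components after removing the top color. -/
def Fac {n : ℕ} (M : Maniplex n) := Quot (FacEq M)

/-- The facet containing a flag. -/
def facOf {n : ℕ} (M : Maniplex n) (Φ : M.V) : Fac M := Quot.mk _ Φ

open Classical in
/-- The characteristic vector `χ_{Fac(Φ)} ∈ ℤ₂^{Fac(M)}` of the facet of `Φ`. -/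
noncomputable def chi {n : ℕ} (M : Maniplex n) (Φ : M.V) : Fac M → ZMod 2 :=
  fun F => if F = facOf M Φ then 1 else 0

/-- The flags of `2̂^M`: pairs `(Φ, x)` with `Φ` a flag of `M` and
`x ∈ ℤ₂^{Fac(M)}`. -/
def HatFlag {n : ℕ} (M : Maniplex n) := M.V × (Fac M → ZMod 2)

/-- The connections of `2̂^M`: `(Φ, x)^i = (Φ^i, x)` for `i < n` and
`(Φ, x)^n = (Φ, x + χ_{Fac(Φ)})`. -/
noncomputable def hatR {n : ℕ} (M : Maniplex n) (i : Fin (n + 1)) (p : HatFlag M) :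
    HatFlag M :=
  if h : (i : ℕ) < n then (M.r ⟨i, h⟩ p.1, p.2) else (p.1, p.2 + chi M p.1)

/-- In `2̂^M`, removing the edges of the top color `n` leaves one connected
component for each vector `x ∈ ℤ₂^{Fac(M)}` (two flags `(Φ,x)`, `(Ψ,y)` are
connected by the colors `< n` iff `x = y`), and each such component is a copy
of `M`: the connections of colors `< n` act as those of `M` on the first
coordinate, via the injection `Φ ↦ (Φ, x)`. In particular every facet of
`2̂^M` is isomorphic to `M`. -/
theorem stmt12 {n : ℕ} (M : Maniplex n) :
    (∀ (Φ Ψ : M.V) (x y : Fac M → ZMod 2),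
      (∃ L : List (Fin n),
        L.foldl (fun p i => hatR M i.castSucc p) ((Φ, x) : HatFlag M) = (Ψ, y)) ↔ x = y) ∧
    (∀ (x : Fac M → ZMod 2) (i : Fin n) (Φ : M.V),
      hatR M i.castSucc ((Φ, x) : HatFlag M) = (M.r i Φ, x)) ∧
    (∀ x : Fac M → ZMod 2, Function.Injective (fun Φ : M.V => ((Φ, x) : HatFlag M))) := by
  have step : ∀ (i : Fin n) (Φ : M.V) (x : Fac M → ZMod 2),
      hatR M i.castSucc ((Φ, x) : HatFlag M) = (M.r i Φ, x) := by
    intro i Φ x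
    simp only [hatR]
    exact dif_pos (show ((i.castSucc : Fin (n+1)) : ℕ) < n from i.isLt)
  have fold : ∀ (L : List (Fin n)) (Φ : M.V) (x : Fac M → ZMod 2),
      L.foldl (fun p i => hatR M i.castSucc p) ((Φ, x) : HatFlag M)
        = (L.foldl (fun w i => M.r i w) Φ, x) := by
    intro L
    induction L with
    | nil => intro Φ x; rfl
    | cons a L ih =>
        intro Φ x
        simp only [List.foldl_cons, step, ih]
        exact (congrArg (fun p => List.foldl (fun p i => hatR M i.castSucc p) p L) (step a Φ x)).trans (ih _ _)
  refine ⟨?_, fun x i Φ => step i Φ x, fun x Φ Ψ h => (Prod.mk.injEq _ _ _ _ ▸ h).1⟩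
  intro Φ Ψ x y
  constructor
  · rintro ⟨L, hL⟩
    rw [fold] at hL
    exact (Prod.mk.injEq _ _ _ _ ▸ hL).2
  · rintro rfl
    obtain ⟨L, hL⟩ := M.conn Φ Ψ
    exact ⟨L, by rw [fold, hL]⟩
end

section
/- If M is a regular maniplex then 2̂^M is a regular maniplex. -/
/-- If `M` is a regular maniplex (its automorphism group is transitive on its
flags), then `2̂^M` is a regular maniplex: for any two flags of `2̂^M` there
is an automorphism of `2̂^M` (a bijection of its flags commuting with all its
connections) taking one to the other. -/
theorem stmt14 {n : ℕ} (M : Maniplex n)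
    (hreg : ∀ Φ Ψ : M.V, ∃ σ : M.V → M.V, Function.Bijective σ ∧
      (∀ (i : Fin n) (v : M.V), σ (M.r i v) = M.r i (σ v)) ∧ σ Φ = Ψ) :
    ∀ p q : HatFlag M, ∃ α : HatFlag M → HatFlag M, Function.Bijective α ∧
      (∀ (i : Fin (n + 1)) (z : HatFlag M), α (hatR M i z) = hatR M i (α z)) ∧
      α p = q := by
  intro p q
  obtain ⟨σ, hbij, hcomm, hσ⟩ := hreg p.1 q.1
  -- foldl commutes with any map commuting with all r i
  have foldl_comm : ∀ (h : M.V → M.V), (∀ (i : Fin n) v, h (M.r i v) = M.r i (h v)) →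
      ∀ (L : List (Fin n)) (Φ : M.V),
      L.foldl (fun w i => M.r i w) (h Φ) = h (L.foldl (fun w i => M.r i w) Φ) := by
    intro h hc L
    induction L with
    | nil => intro Φ; rfl
    | cons a L ih => intro Φ; simp only [List.foldl_cons, ← hc a Φ]; exact ih _
  set e := Equiv.ofBijective σ hbij with he
  have hσe : ∀ v, σ v = e v := fun v => rfl
  have hτcomm : ∀ (i : Fin n) v, e.symm (M.r i v) = M.r i (e.symm v) := by
    intro i v
    apply hbij.1
    rw [hcomm]
    show e (e.symm _) = M.r i (e (e.symm v))
    rw [e.apply_symm_apply, e.apply_symm_apply]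
  have mapEq : ∀ (h : M.V → M.V), (∀ (i : Fin n) v, h (M.r i v) = M.r i (h v)) →
      ∀ a b, FacEq M a b → FacEq M (h a) (h b) := by
    rintro h hc a b ⟨L, hL, hfold⟩
    exact ⟨L, hL, by rw [foldl_comm h hc L a, hfold]⟩
  let f : Fac M → Fac M := Quot.map σ (mapEq σ hcomm)
  let g : Fac M → Fac M := Quot.map e.symm (mapEq e.symm hτcomm)
  have hgf : ∀ F, g (f F) = F := by
    intro F
    induction F using Quot.ind with | _ a => ?_
    show Quot.mk (FacEq M) (e.symm (σ a)) = Quot.mk (FacEq M) a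
    rw [hσe, e.symm_apply_apply]
  have hfg : ∀ F, f (g F) = F := by
    intro F
    induction F using Quot.ind with | _ a => ?_
    show Quot.mk (FacEq M) (σ (e.symm a)) = Quot.mk (FacEq M) a
    rw [hσe, e.apply_symm_apply]
  have hfFac : ∀ a, f (facOf M a) = facOf M (σ a) := fun a => rfl
  set z : Fac M → ZMod 2 := fun F => q.2 F - p.2 (g F) with hz
  refine ⟨fun w => (σ w.1, fun F => w.2 (g F) + z F), ?_, ?_, ?_⟩
  · constructor
    · rintro ⟨a, x⟩ ⟨b, y⟩ hab
      have h1 : σ a = σ b := congrArg Prod.fst hab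
      have h2 : (fun F => x (g F) + z F) = (fun F => y (g F) + z F) :=
        congrArg Prod.snd hab
      have hab1 : a = b := hbij.1 h1
      have hxy : x = y := by
        funext F
        have := congrFun h2 (f F)
        rw [hgf] at this
        exact add_right_cancel this
      rw [hab1, hxy]
    · rintro ⟨b, y⟩
      refine ⟨(e.symm b, fun F => y (f F) - z (f F)), ?_⟩
      show (σ (e.symm b), fun F => (y (f (g F)) - z (f (g F))) + z F) = (b, y)
      have h1 : σ (e.symm b) = b := by rw [hσe, e.apply_symm_apply]
      refine Prod.ext h1 ?_
      funext F
      show (y (f (g F)) - z (f (g F))) + z F = y F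
      rw [hfg]; ring
  · intro i w
    by_cases h : (i : ℕ) < n
    · simp only [hatR, dif_pos h, h, ↓reduceDIte]
      exact Prod.ext (hcomm ⟨i, h⟩ w.1) rfl
    · simp only [hatR, dif_neg h, h, ↓reduceDIte]
      refine Prod.ext rfl ?_
      funext F
      show (w.2 + chi M w.1) (g F) + z F = ((fun F => w.2 (g F) + z F) + chi M (σ w.1)) F
      have hchi : chi M w.1 (g F) = chi M (σ w.1) F := by
        simp only [chi]
        by_cases hF : F = facOf M (σ w.1)
        · rw [if_pos hF, if_pos]
          rw [hF, ← hfFac, hgf]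
        · rw [if_neg hF, if_neg]
          intro hg
          apply hF
          rw [← hfg F, hg, hfFac]
      show w.2 (g F) + chi M w.1 (g F) + z F = w.2 (g F) + z F + chi M (σ w.1) F
      rw [hchi]; ring
  · show (σ p.1, fun F => p.2 (g F) + z F) = q
    refine Prod.ext hσ ?_
    funext F
    show p.2 (g F) + (q.2 F - p.2 (g F)) = q.2 F
    ring
end

section
/- Define M₃ = 2̂^{M₂} where M₂ is the flag graph of the square (generated by involutions r₀, r₁ on 8 flags with (r₀r₁)⁴ = 1 acting regularly). Then M₃ is isomorphic to the flag graph of the torus map {4,4}_{(4,0)}: the monodromy group of M₃ is generated by involutions r₀, r₁, r₂ satisfying (r₀r₂)² = 1, (r₀r₁)⁴ = 1, (r₁r₂)⁴ = 1, and (r₀r₁r₂r₁)⁴ = 1, acting regularly on 128 flags. -/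
/-- The right action of a word of connections on the flags of `M₃ = 2̂^{M₂}`. -/
noncomputable def hatAct (M : Maniplex 2) (L : List (Fin 3)) (p : HatFlag M) : HatFlag M :=
  L.foldl (fun z i => hatR M i z) p

namespace Stmt17Aux
variable (M : Maniplex 2)

def act2 (L : List (Fin 2)) (v : M.V) : M.V := L.foldl (fun w i => M.r i w) v

@[simp] lemma act2_nil (v : M.V) : act2 M [] v = v := rfl
@[simp] lemma act2_cons (i : Fin 2) (L : List (Fin 2)) (v : M.V) :
    act2 M (i :: L) v = act2 M L (M.r i v) := rfl
@[simp] lemma act2_append (L L' : List (Fin 2)) (v : M.V) :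
    act2 M (L ++ L') v = act2 M L' (act2 M L v) := List.foldl_append ..

lemma act2_rev (L : List (Fin 2)) (v : M.V) : act2 M L.reverse (act2 M L v) = v := by
  induction L generalizing v with
  | nil => rfl
  | cons i L ih => simp [ih, M.invol]

lemma act2_rev' (L : List (Fin 2)) (v : M.V) : act2 M L (act2 M L.reverse v) = v := by
  have := act2_rev M L.reverse v
  rwa [List.reverse_reverse] at this

/-- `s = r₁ ∘ r₀`. -/
def sq (v : M.V) : M.V := M.r 1 (M.r 0 v)

def sIt : ℕ → M.V → M.V
  | 0, v => v
  | k+1, v => sq M (sIt k v)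

lemma sIt_inner (k : ℕ) (v : M.V) : sIt M (k+1) v = sIt M k (sq M v) := by
  induction k generalizing v with
  | zero => rfl
  | succ k ih => show sq M (sIt M (k+1) v) = _; rw [ih]; rfl

lemma sIt_add (a b : ℕ) (v : M.V) : sIt M (a + b) v = sIt M a (sIt M b v) := by
  induction a with
  | zero => simp [Nat.zero_add]; rfl
  | succ a ih =>
    have h : a + 1 + b = (a + b) + 1 := by omega
    rw [h]
    show sq M (sIt M (a+b) v) = _
    rw [ih]
    rfl

variable (hrel : ∀ v : M.V,
      ([0, 1, 0, 1, 0, 1, 0, 1] : List (Fin 2)).foldl (fun w i => M.r i w) v = v)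

include hrel in
lemma sIt4 (v : M.V) : sIt M 4 v = v := hrel v

include hrel in
lemma sIt_mod (k : ℕ) (v : M.V) : sIt M k v = sIt M (k % 4) v := by
  induction k using Nat.strong_induction_on with
  | _ k ih =>
    rcases lt_or_ge k 4 with h | h
    · rw [Nat.mod_eq_of_lt h]
    · obtain ⟨m, rfl⟩ : ∃ m, k = m + 4 := ⟨k - 4, by omega⟩
      rw [sIt_add, sIt4 M hrel, ih m (by omega)]
      congr 1
      omega

def nf (j : ℕ) (e : Bool) (v : M.V) : M.V := sIt M j (cond e (M.r 0 v) v)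

include hrel in
lemma nf_closure : ∀ L : List (Fin 2), ∃ j, j < 4 ∧ ∃ e, ∀ v, act2 M L v = nf M j e v := by
  intro L
  induction L with
  | nil => exact ⟨0, by omega, false, fun v => rfl⟩
  | cons i L ih =>
    obtain ⟨j, hj, e, he⟩ := ih
    have hi : i = 0 ∨ i = 1 := by omega
    rcases hi with rfl | rfl
    · refine ⟨j, hj, !e, fun v => ?_⟩
      rw [act2_cons, he]
      unfold nf
      cases e <;> simp [M.invol]
    · cases e
      · refine ⟨(j+1) % 4, Nat.mod_lt _ (by norm_num), true, fun v => ?_⟩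
        rw [act2_cons, he]
        show sIt M j (M.r 1 v) = sIt M ((j+1) % 4) (M.r 0 v)
        rw [← sIt_mod M hrel, sIt_inner]
        show _ = sIt M j (M.r 1 (M.r 0 (M.r 0 v)))
        rw [M.invol]
      · refine ⟨(j+3) % 4, Nat.mod_lt _ (by norm_num), false, fun v => ?_⟩
        rw [act2_cons, he]
        show sIt M j (M.r 0 (M.r 1 v)) = sIt M ((j+3) % 4) v
        rw [← sIt_mod M hrel, sIt_add]
        congr 1
        -- r0 (r1 v) = sIt 3 v
        have h4 : sIt M 4 (M.r 0 (M.r 1 v)) = M.r 0 (M.r 1 v) := sIt4 M hrel _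
        rw [sIt_inner] at h4
        have : sq M (M.r 0 (M.r 1 v)) = v := by
          show M.r 1 (M.r 0 (M.r 0 (M.r 1 v))) = v
          rw [M.invol, M.invol]
        rw [this] at h4
        exact h4.symm

variable (hcard : Nat.card M.V = 8)

include hrel hcard in
lemma free_fix : ∀ (L : List (Fin 2)) (Φ : M.V), act2 M L Φ = Φ → ∀ v, act2 M L v = v := by
  have finV : Finite M.V := Nat.finite_of_card_ne_zero (by rw [hcard]; norm_num)
  intro L Φ hfix v
  set m : Fin 4 × Bool → M.V := fun p => nf M p.1 p.2 Φ with hm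
  have hsurj : Function.Surjective m := by
    intro w
    obtain ⟨L', hL'⟩ := M.conn Φ w
    obtain ⟨j, hj, e, he⟩ := nf_closure M hrel L'
    exact ⟨(⟨j, hj⟩, e), by simp only [hm]; rw [← he Φ]; exact hL'⟩
  have hinj : Function.Injective m := by
    have hb : Function.Bijective m := by
      rw [Nat.bijective_iff_surjective_and_card]
      refine ⟨hsurj, ?_⟩
      rw [hcard]
      simp [Nat.card_eq_fintype_card]
    exact hb.1
  obtain ⟨j, hj, e, he⟩ := nf_closure M hrel L
  have h0 : m (⟨j, hj⟩, e) = m (⟨0, by omega⟩, false) := by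
    simp only [hm]
    show nf M j e Φ = nf M 0 false Φ
    rw [← he Φ]
    exact hfix
  have := hinj h0
  have hj0 : j = 0 := by
    have := congrArg (fun p => (p.1 : Fin 4).val) this
    simpa using this
  have he0 : e = false := (congrArg Prod.snd this)
  rw [he v, hj0, he0]
  rfl

include hrel hcard in
lemma free2' (L L' : List (Fin 2)) (Φ : M.V) (h : act2 M L Φ = act2 M L' Φ) :
    ∀ v, act2 M L v = act2 M L' v := by
  intro v
  have h1 : act2 M (L ++ L'.reverse) Φ = Φ := by
    rw [act2_append, h, act2_rev]
  have h2 := free_fix M hrel hcard (L ++ L'.reverse) Φ h1 v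
  rw [act2_append] at h2
  calc act2 M L v = act2 M L' (act2 M L'.reverse (act2 M L v)) := (act2_rev' ..).symm
    _ = act2 M L' v := by rw [h2]

lemma comm_fold (χ : M.V → M.V) (hc : ∀ i v, χ (M.r i v) = M.r i (χ v)) :
    ∀ (L : List (Fin 2)) (u : M.V), χ (act2 M L u) = act2 M L (χ u) := by
  intro L
  induction L with
  | nil => intro u; rfl
  | cons i L ih => intro u; rw [act2_cons, ih, hc, act2_cons]

lemma comm_ext (χ : M.V → M.V) (hc : ∀ i v, χ (M.r i v) = M.r i (χ v))
    (Φ₀ : M.V) (hfix : χ Φ₀ = Φ₀) : ∀ v, χ v = v := by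
  intro v
  obtain ⟨L, hL⟩ := M.conn Φ₀ v
  rw [← hL]
  show χ (act2 M L Φ₀) = act2 M L Φ₀
  rw [comm_fold M χ hc, hfix]

include hrel hcard in
lemma exists_semi (Φ Ψ : M.V) :
    ∃ φ : M.V → M.V, (∀ i v, φ (M.r i v) = M.r i (φ v)) ∧ φ Φ = Ψ := by
  have hspec : ∀ w : M.V, act2 M (M.conn Φ w).choose Φ = w :=
    fun w => (M.conn Φ w).choose_spec
  have key : ∀ (L : List (Fin 2)) (w : M.V), act2 M L Φ = w →
      act2 M (M.conn Φ w).choose Ψ = act2 M L Ψ := by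
    intro L w h
    exact free2' M hrel hcard _ L Φ ((hspec w).trans h.symm) Ψ
  refine ⟨fun v => act2 M (M.conn Φ v).choose Ψ, ?_, ?_⟩
  · intro i v
    have h1 : act2 M ((M.conn Φ v).choose ++ [i]) Φ = M.r i v := by
      rw [act2_append, hspec v]
      rfl
    show act2 M (M.conn Φ (M.r i v)).choose Ψ = M.r i (act2 M (M.conn Φ v).choose Ψ)
    rw [key _ _ h1, act2_append]
    rw [key _ v (hspec v)]
    rfl
  · exact free2' M hrel hcard _ [] Φ (hspec Φ) Ψ

include hrel hcard in
lemma exists_auto (Φ Ψ : M.V) :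
    ∃ φ ψ : M.V → M.V, (∀ i v, φ (M.r i v) = M.r i (φ v)) ∧
      (∀ i v, ψ (M.r i v) = M.r i (ψ v)) ∧
      (∀ v, ψ (φ v) = v) ∧ (∀ v, φ (ψ v) = v) ∧ φ Φ = Ψ := by
  obtain ⟨φ, hφc, hφ⟩ := exists_semi M hrel hcard Φ Ψ
  obtain ⟨ψ, hψc, hψ⟩ := exists_semi M hrel hcard Ψ Φ
  refine ⟨φ, ψ, hφc, hψc, ?_, ?_, hφ⟩
  · exact comm_ext M (fun v => ψ (φ v))
      (fun i v => by show ψ (φ (M.r i v)) = M.r i (ψ (φ v)); rw [hφc, hψc]) Φ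
      (by show ψ (φ Φ) = Φ; rw [hφ, hψ])
  · exact comm_ext M (fun v => φ (ψ v))
      (fun i v => by show φ (ψ (M.r i v)) = M.r i (φ (ψ v)); rw [hψc, hφc]) Ψ
      (by show φ (ψ Ψ) = Ψ; rw [hψ, hφ])
lemma facEq_refl (a : M.V) : FacEq M a a := ⟨[], by simp, rfl⟩

lemma facEq_symm {a b : M.V} (h : FacEq M a b) : FacEq M b a := by
  obtain ⟨L, hL, hf⟩ := h
  refine ⟨L.reverse, fun i hi => hL i (List.mem_reverse.1 hi), ?_⟩
  show act2 M L.reverse b = a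
  rw [← hf]
  exact act2_rev M L a

lemma facEq_trans {a b c : M.V} (h : FacEq M a b) (h' : FacEq M b c) : FacEq M a c := by
  obtain ⟨L, hL, hf⟩ := h
  obtain ⟨L', hL', hf'⟩ := h'
  refine ⟨L ++ L', fun i hi => ?_, ?_⟩
  · rcases List.mem_append.1 hi with h | h
    · exact hL i h
    · exact hL' i h
  · show act2 M (L ++ L') a = c
    rw [act2_append]
    show act2 M L' (act2 M L a) = c
    rw [show act2 M L a = b from hf]
    exact hf'

lemma facEq_equiv : Equivalence (FacEq M) :=
  ⟨facEq_refl M, facEq_symm M, facEq_trans M⟩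

lemma facOf_eq_iff (a b : M.V) : facOf M a = facOf M b ↔ FacEq M a b := by
  constructor
  · intro h
    exact ((facEq_equiv M).eqvGen_iff).1 (Quot.eq.1 h)
  · exact Quot.sound

lemma facEq_char (a b : M.V) : FacEq M a b ↔ b = a ∨ b = M.r 0 a := by
  constructor
  · rintro ⟨L, hL, hf⟩
    have key : ∀ (L : List (Fin 2)), (∀ i ∈ L, (i : ℕ) + 1 ≠ 2) → ∀ a : M.V,
        act2 M L a = a ∨ act2 M L a = M.r 0 a := by
      intro L hL
      induction L with
      | nil => intro a; left; rfl
      | cons i L ih =>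
        intro a
        have hi0 : i = 0 := by
          have := hL i (by simp)
          omega
        subst hi0
        rw [act2_cons]
        rcases ih (fun j hj => hL j (by simp [hj])) (M.r 0 a) with h | h
        · right; exact h
        · left; rw [h, M.invol]
    have := key L hL a
    rw [show act2 M L a = b from hf] at this
    exact this
  · rintro (rfl | rfl)
    · exact facEq_refl M _
    · exact ⟨[0], by decide, rfl⟩

include hcard in
lemma card_fac : Nat.card (Fac M) = 4 := by
  classical
  have finV : Finite M.V := Nat.finite_of_card_ne_zero (by rw [hcard]; norm_num)
  have finF : Finite (Fac M) := Quot.finite _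
  letI := Fintype.ofFinite M.V
  letI := Fintype.ofFinite (Fac M)
  rw [Nat.card_eq_fintype_card]
  have hV : Fintype.card M.V = 8 := by rw [← Nat.card_eq_fintype_card, hcard]
  have hsum : (Finset.univ : Finset M.V).card =
      ∑ F : Fac M, (Finset.univ.filter fun v => facOf M v = F).card :=
    Finset.card_eq_sum_card_fiberwise (fun x _ => Finset.mem_univ _)
  have hfib : ∀ F : Fac M, (Finset.univ.filter fun v => facOf M v = F).card = 2 := by
    intro F
    obtain ⟨a, rfl⟩ := Quot.exists_rep F
    have hset : (Finset.univ.filter fun v => facOf M v = Quot.mk _ a) = {a, M.r 0 a} := by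
      ext v
      simp only [Finset.mem_filter, Finset.mem_univ, true_and, Finset.mem_insert,
        Finset.mem_singleton]
      constructor
      · intro h
        have : FacEq M v a := (facOf_eq_iff M v a).1 h
        rcases (facEq_char M v a).1 this with h' | h'
        · left; exact h'.symm
        · right; rw [h', M.invol]
      · rintro (rfl | rfl)
        · rfl
        · exact (facOf_eq_iff M (M.r 0 a) a).2 (facEq_symm M ((facEq_char M a _).2 (Or.inr rfl)))
    rw [hset, Finset.card_pair (fun h => M.fpf 0 a h.symm)]
  have h2 : Fintype.card M.V = ∑ _F : Fac M, 2 := by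
    rw [← Finset.card_univ, hsum]
    exact Finset.sum_congr rfl fun F _ => hfib F
  rw [hV, Finset.sum_const, smul_eq_mul, Finset.card_univ] at h2
  omega

include hcard in
lemma card_hat : Nat.card (HatFlag M) = 128 := by
  have finV : Finite M.V := Nat.finite_of_card_ne_zero (by rw [hcard]; norm_num)
  have finF : Finite (Fac M) := Quot.finite _
  show Nat.card (M.V × (Fac M → ZMod 2)) = 128
  rw [Nat.card_prod, hcard, Nat.card_fun, Nat.card_zmod, card_fac M hcard]
  norm_num

@[simp] lemma hatAct_nil (p : HatFlag M) : hatAct M [] p = p := rfl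
@[simp] lemma hatAct_cons (i : Fin 3) (W : List (Fin 3)) (p : HatFlag M) :
    hatAct M (i :: W) p = hatAct M W (hatR M i p) := rfl
@[simp] lemma hatAct_append (A B : List (Fin 3)) (p : HatFlag M) :
    hatAct M (A ++ B) p = hatAct M B (hatAct M A p) := List.foldl_append ..

def gAct : List (Fin 3) → M.V → M.V
  | [], v => v
  | i :: W, v => if h : (i : ℕ) < 2 then gAct W (M.r ⟨i, h⟩ v) else gAct W v

noncomputable def tAct : List (Fin 3) → M.V → Fac M → ZMod 2
  | [], _ => 0
  | i :: W, v => if h : (i : ℕ) < 2 then tAct W (M.r ⟨i, h⟩ v) else chi M v + tAct W v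

lemma hatR_lt (i : Fin 3) (h : (i : ℕ) < 2) (p : HatFlag M) :
    hatR M i p = (M.r ⟨i, h⟩ p.1, p.2) := by
  unfold hatR
  exact dif_pos h

lemma hatR_top (i : Fin 3) (h : ¬ (i : ℕ) < 2) (p : HatFlag M) :
    hatR M i p = (p.1, p.2 + chi M p.1) := by
  unfold hatR
  exact dif_neg h

lemma hat_decomp : ∀ (W : List (Fin 3)) (Φ : M.V) (x : Fac M → ZMod 2),
    hatAct M W (Φ, x) = (gAct M W Φ, x + tAct M W Φ) := by
  intro W
  induction W with
  | nil => intro Φ x; show (Φ, x) = (Φ, x + 0); rw [add_zero]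
  | cons i W ih =>
    intro Φ x
    erw [hatAct_cons]
    by_cases h : (i : ℕ) < 2
    · erw [hatR_lt M i h, ih]
      show _ = (gAct M (i :: W) Φ, x + tAct M (i :: W) Φ)
      simp only [gAct, tAct, dif_pos h]
    · erw [hatR_top M i h, ih]
      show _ = (gAct M (i :: W) Φ, x + tAct M (i :: W) Φ)
      simp only [gAct, tAct, dif_neg h]
      rw [add_assoc]

def strip : List (Fin 3) → List (Fin 2)
  | [] => []
  | i :: W => if h : (i : ℕ) < 2 then ⟨i, h⟩ :: strip W else strip W

lemma gAct_strip : ∀ (W : List (Fin 3)) (v : M.V), gAct M W v = act2 M (strip W) v := by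
  intro W
  induction W with
  | nil => intro v; rfl
  | cons i W ih =>
    intro v
    by_cases h : (i : ℕ) < 2
    · simp only [gAct, strip, dif_pos h, ih, act2_cons]
    · simp only [gAct, strip, dif_neg h, ih]

lemma facEq_map (φ : M.V → M.V) (hc : ∀ i v, φ (M.r i v) = M.r i (φ v))
    {a b : M.V} (h : FacEq M a b) : FacEq M (φ a) (φ b) := by
  obtain ⟨L, hL, hf⟩ := h
  refine ⟨L, hL, ?_⟩
  show act2 M L (φ a) = φ b
  rw [← comm_fold M φ hc, show act2 M L a = b from hf]

def Fmap (φ : M.V → M.V) (hc : ∀ i v, φ (M.r i v) = M.r i (φ v)) : Fac M → Fac M :=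
  Quot.map φ (fun _ _ h => facEq_map M φ hc h)

lemma Fmap_facOf (φ : M.V → M.V) (hc : ∀ i v, φ (M.r i v) = M.r i (φ v)) (v : M.V) :
    Fmap M φ hc (facOf M v) = facOf M (φ v) := rfl

section Equivar
variable (φ ψ : M.V → M.V)
  (hcφ : ∀ i v, φ (M.r i v) = M.r i (φ v)) (hcψ : ∀ i v, ψ (M.r i v) = M.r i (ψ v))
  (hψφ : ∀ v, ψ (φ v) = v) (hφψ : ∀ v, φ (ψ v) = v)

include hcφ hψφ hφψ in
lemma chi_equiv (Φ : M.V) : chi M (φ Φ) = fun F => chi M Φ (Fmap M ψ hcψ F) := by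
  funext F
  unfold chi
  by_cases h : F = facOf M (φ Φ)
  · rw [if_pos h, if_pos]
    rw [h, Fmap_facOf, hψφ]
  · rw [if_neg h, if_neg]
    intro hcon
    apply h
    have hF : Fmap M φ hcφ (Fmap M ψ hcψ F) = F := by
      induction F using Quot.ind with
      | _ a => show facOf M (φ (ψ a)) = facOf M a; rw [hφψ]
    rw [← hF, hcon]
    rfl

include hcφ hψφ hφψ in
lemma tAct_equiv : ∀ (W : List (Fin 3)) (Φ : M.V),
    tAct M W (φ Φ) = fun F => tAct M W Φ (Fmap M ψ hcψ F) := by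
  intro W
  induction W with
  | nil => intro Φ; rfl
  | cons i W ih =>
    intro Φ
    by_cases h : (i : ℕ) < 2
    · show tAct M (i :: W) (φ Φ) = _
      simp only [tAct, dif_pos h]
      rw [← hcφ, ih]
    · simp only [tAct, dif_neg h]
      rw [ih Φ, chi_equiv M φ ψ hcφ hcψ hψφ hφψ Φ]
      rfl
end Equivar

lemma hatR0 (p : HatFlag M) : hatR M 0 p = (M.r 0 p.1, p.2) := by
  rw [hatR_lt M 0 (by decide) p]
  norm_num
  rfl

lemma hatR1 (p : HatFlag M) : hatR M 1 p = (M.r 1 p.1, p.2) := by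
  rw [hatR_lt M 1 (by decide) p]
  norm_num
  rfl

lemma hatR2 (p : HatFlag M) : hatR M 2 p = (p.1, p.2 + chi M p.1) := by
  rw [hatR_top M 2 (by decide) p]

lemma chi_r0 (Φ : M.V) : chi M (M.r 0 Φ) = chi M Φ := by
  unfold chi
  rw [show facOf M (M.r 0 Φ) = facOf M Φ from
    Quot.sound ⟨[0], by decide, show M.r 0 (M.r 0 Φ) = Φ from M.invol 0 Φ⟩]

lemma key2 (x a : Fac M → ZMod 2) : x + a + a = x := by
  funext F
  have h : ∀ u v : ZMod 2, u + v + v = u := by decide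
  exact h (x F) (a F)

lemma key4 (x a b : Fac M → ZMod 2) : x + a + b + a + b = x := by
  funext F
  have h : ∀ u v w : ZMod 2, u + v + w + v + w = u := by decide
  exact h (x F) (a F) (b F)

lemma hat_invol (i : Fin 3) (p : HatFlag M) : hatR M i (hatR M i p) = p := by
  by_cases h : (i : ℕ) < 2
  · rw [hatR_lt M i h, hatR_lt M i h]
    show (M.r ⟨i, h⟩ (M.r ⟨i, h⟩ p.1), p.2) = p
    rw [M.invol]
    exact Prod.mk.eta
  · rw [hatR_top M i h, hatR_top M i h]
    show (p.1, p.2 + chi M p.1 + chi M p.1) = p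
    rw [key2]
    exact Prod.mk.eta

lemma hat_rel1 (p : HatFlag M) : hatAct M [0, 2, 0, 2] p = p := by
  simp only [hatAct_cons, hatAct_nil, hatR, M.invol, chi_r0]
  simp [M.invol, chi_r0]
  rw [key2]
  exact Prod.mk.eta

include hrel in
lemma hat_rel2 (p : HatFlag M) : hatAct M [0, 1, 0, 1, 0, 1, 0, 1] p = p := by
  simp only [hatAct_cons, hatAct_nil, hatR]
  simp
  have h := hrel p.1
  simp only [List.foldl_cons, List.foldl_nil] at h
  rw [h]
  exact Prod.mk.eta

lemma hat_rel3 (p : HatFlag M) : hatAct M [1, 2, 1, 2, 1, 2, 1, 2] p = p := by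
  simp only [hatAct_cons, hatAct_nil, hatR]
  simp [M.invol]
  rw [key4]
  exact Prod.mk.eta

lemma hat_rel4 (p : HatFlag M) :
    hatAct M [0, 1, 2, 1, 0, 1, 2, 1, 0, 1, 2, 1, 0, 1, 2, 1] p = p := by
  simp only [hatAct_cons, hatAct_nil, hatR]
  simp [M.invol]
  rw [key4]
  exact Prod.mk.eta

lemma hatAct_emb : ∀ (L : List (Fin 2)) (Φ : M.V) (x : Fac M → ZMod 2),
    hatAct M (L.map Fin.castSucc) (Φ, x) = (act2 M L Φ, x) := by
  intro L
  induction L with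
  | nil => intro Φ x; rfl
  | cons i L ih =>
    intro Φ x
    erw [List.map_cons, hatAct_cons,
      hatR_lt M (Fin.castSucc i) (by simp [Fin.coe_castSucc, i.isLt])]
    show hatAct M (L.map Fin.castSucc) (M.r ⟨(Fin.castSucc i : ℕ), _⟩ Φ, x) = _
    have he : (⟨(Fin.castSucc i : ℕ), by simp [Fin.coe_castSucc, i.isLt]⟩ : Fin 2) = i := by
      apply Fin.ext
      simp [Fin.coe_castSucc]
    rw [he, ih]
    rfl

open Classical in
/-- the indicator vector of a facet -/
noncomputable def deltaF (F : Fac M) : Fac M → ZMod 2 := fun F' => if F' = F then 1 else 0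

lemma chi_eq_delta (u : M.V) : chi M u = deltaF M (facOf M u) := rfl

lemma exists_chi_word (Ψ : M.V) (F : Fac M) :
    ∃ W : List (Fin 3), ∀ x, hatAct M W (Ψ, x) = (Ψ, x + deltaF M F) := by
  obtain ⟨u, rfl⟩ := Quot.exists_rep F
  obtain ⟨L, hL⟩ := M.conn Ψ u
  have hL' : act2 M L Ψ = u := hL
  refine ⟨L.map Fin.castSucc ++ [2] ++ L.reverse.map Fin.castSucc, fun x => ?_⟩
  erw [hatAct_append, hatAct_append, hatAct_emb M L Ψ x, hL']
  rw [show hatAct M [2] (u, x) = (u, x + chi M u) from hatR2 M (u, x)]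
  rw [hatAct_emb, ← hL', act2_rev, chi_eq_delta, hL']
  rfl

include hcard in
lemma exists_add_word (Ψ : M.V) (d : Fac M → ZMod 2) :
    ∃ W : List (Fin 3), ∀ x, hatAct M W (Ψ, x) = (Ψ, x + d) := by
  classical
  have finV : Finite M.V := Nat.finite_of_card_ne_zero (by rw [hcard]; norm_num)
  have finF : Finite (Fac M) := Quot.finite _
  letI := Fintype.ofFinite (Fac M)
  have claim : ∀ s : Finset (Fac M), ∃ W : List (Fin 3), ∀ x,
      hatAct M W (Ψ, x) = (Ψ, x + ∑ F ∈ s, (if d F = 1 then deltaF M F else 0)) := by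
    intro s
    induction s using Finset.induction_on with
    | empty => exact ⟨[], fun x => by simp; rfl⟩
    | insert a s ha ih =>
      obtain ⟨Ws, hWs⟩ := ih
      by_cases hda : d a = 1
      · obtain ⟨Wa, hWa⟩ := exists_chi_word M Ψ a
        refine ⟨Ws ++ Wa, fun x => ?_⟩
        erw [hatAct_append, hWs, hWa, Finset.sum_insert ha, if_pos hda]
        rw [add_comm (deltaF M a) _, ← add_assoc]
      · refine ⟨Ws, fun x => ?_⟩
        rw [hWs, Finset.sum_insert ha, if_neg hda, zero_add]
  obtain ⟨W, hW⟩ := claim Finset.univ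
  refine ⟨W, fun x => ?_⟩
  rw [hW]
  congr 1
  congr 1
  funext G
  rw [Finset.sum_apply]
  rw [Finset.sum_eq_single G]
  · have h01 : ∀ a : ZMod 2, a = 0 ∨ a = 1 := by decide
    rcases h01 (d G) with h | h <;> rw [h] <;> simp [deltaF]
  · intro F _ hFG
    by_cases h : d F = 1
    · rw [if_pos h]
      exact if_neg (fun hh => hFG hh.symm)
    · rw [if_neg h]
      rfl
  · intro h
    exact absurd (Finset.mem_univ G) h

include hrel hcard in
lemma hat_trans (p q : HatFlag M) : ∃ W : List (Fin 3), hatAct M W p = q := by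
  obtain ⟨Φ, x⟩ := p
  obtain ⟨Ψ, y⟩ := q
  obtain ⟨L, hL⟩ := M.conn Φ Ψ
  have hL' : act2 M L Φ = Ψ := hL
  obtain ⟨W2, hW2⟩ := exists_add_word M hcard Ψ (y - x)
  refine ⟨L.map Fin.castSucc ++ W2, ?_⟩
  erw [hatAct_append, hatAct_emb, hL', hW2, add_sub_cancel]

include hrel hcard in
lemma hat_free (L L' : List (Fin 3)) (p : HatFlag M)
    (h : hatAct M L p = hatAct M L' p) : ∀ q, hatAct M L q = hatAct M L' q := by
  intro q
  obtain ⟨Φ, x⟩ := p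
  obtain ⟨Ψ, y⟩ := q
  erw [hat_decomp, hat_decomp, Prod.mk.injEq] at h
  obtain ⟨h1, h2⟩ := h
  have ht : tAct M L Φ = tAct M L' Φ := add_left_cancel h2
  erw [hat_decomp, hat_decomp, Prod.mk.injEq]
  constructor
  · rw [gAct_strip, gAct_strip]
    rw [gAct_strip, gAct_strip] at h1
    exact free2' M hrel hcard _ _ Φ h1 Ψ
  · obtain ⟨φ, ψ, hcφ, hcψ, hψφ, hφψ, hφ⟩ := exists_auto M hrel hcard Φ Ψ
    congr 1
    calc tAct M L Ψ = tAct M L (φ Φ) := by rw [hφ]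
      _ = fun F => tAct M L Φ (Fmap M ψ hcψ F) := tAct_equiv M φ ψ hcφ hcψ hψφ hφψ L Φ
      _ = fun F => tAct M L' Φ (Fmap M ψ hcψ F) := by rw [ht]
      _ = tAct M L' (φ Φ) := (tAct_equiv M φ ψ hcφ hcψ hψφ hφψ L' Φ).symm
      _ = tAct M L' Ψ := by rw [hφ]

end Stmt17Aux

/-- Let `M₂ = M` be the flag graph of the square: a rank-2 maniplex on 8 flags
whose connections satisfy `(r₀r₁)⁴ = 1`. Then `M₃ = 2̂^{M₂}` is (isomorphic
to) the flag graph of the torus map `{4,4}_{(4,0)}`: it has 128 flags, its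
monodromy group is generated by the involutions `r₀, r₁, r₂` which satisfy
`(r₀r₂)² = (r₀r₁)⁴ = (r₁r₂)⁴ = (r₀r₁r₂r₁)⁴ = 1`, and this monodromy group
acts regularly (sharply transitively) on the 128 flags. -/
theorem stmt17 (M : Maniplex 2)
    (hcard : Nat.card M.V = 8)
    (hrel : ∀ v : M.V,
      ([0, 1, 0, 1, 0, 1, 0, 1] : List (Fin 2)).foldl (fun w i => M.r i w) v = v) :
    Nat.card (HatFlag M) = 128 ∧
    (∀ (i : Fin 3) (p : HatFlag M), hatR M i (hatR M i p) = p) ∧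
    (∀ p : HatFlag M, hatAct M [0, 2, 0, 2] p = p) ∧
    (∀ p : HatFlag M, hatAct M [0, 1, 0, 1, 0, 1, 0, 1] p = p) ∧
    (∀ p : HatFlag M, hatAct M [1, 2, 1, 2, 1, 2, 1, 2] p = p) ∧
    (∀ p : HatFlag M,
      hatAct M [0, 1, 2, 1, 0, 1, 2, 1, 0, 1, 2, 1, 0, 1, 2, 1] p = p) ∧
    (∀ p q : HatFlag M, ∃ L : List (Fin 3), hatAct M L p = q) ∧
    (∀ (L L' : List (Fin 3)) (p : HatFlag M),
      hatAct M L p = hatAct M L' p → ∀ q, hatAct M L q = hatAct M L' q) := by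
  
  exact ⟨Stmt17Aux.card_hat M hcard, Stmt17Aux.hat_invol M,
    Stmt17Aux.hat_rel1 M, Stmt17Aux.hat_rel2 M hrel, Stmt17Aux.hat_rel3 M,
    Stmt17Aux.hat_rel4 M, Stmt17Aux.hat_trans M hrel hcard,
    Stmt17Aux.hat_free M hrel hcard⟩
end

section
/- In the torus map {4,4}_{(8,0)}, the monodromy η = r₂r₁r₀r₁r₂r₁r₂r₁ is an involution and maps the 8 flags of any facet (square face) to 8 pairwise distinct facets. -/
/-- The flags of the torus map `{4,4}_{(8,0)}`: a flag consists of a square of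
the `8 × 8` toroidal chessboard (an element of `(ℤ/8)²`) together with one of
the 8 flags of that square, encoded by the side `s ∈ ℤ/4` of the square and an
endpoint `t ∈ ℤ/2` of that side (the vertex of the flag is corner `s + t`). -/
abbrev F44 := (ZMod 8 × ZMod 8) × (ZMod 4 × ZMod 2)

/-- The connection `r₀`: change the vertex, keeping the edge and the square. -/
def r0 : F44 → F44 := fun ⟨p, s, t⟩ => (p, (s, t + 1))

/-- The connection `r₁`: change the edge, keeping the vertex and the square. -/
def r1 : F44 → F44 := fun ⟨p, s, t⟩ => (p, (if t = 0 then s - 1 else s + 1, t + 1))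

/-- The displacement to the neighboring square across side `s`. -/
def wvec : ZMod 4 → ZMod 8 × ZMod 8 := fun s =>
  if s = 0 then (0, -1) else if s = 1 then (1, 0) else if s = 2 then (0, 1) else (-1, 0)

/-- The connection `r₂`: change the square, keeping the vertex and the edge. -/
def r2 : F44 → F44 := fun ⟨p, s, t⟩ => (p + wvec s, (s + 2, t + 1))

/-- The monodromy `η = r₂r₁r₀r₁r₂r₁r₂r₁`, acting on flags on the right
(`r₂` is applied first). -/
def eta : F44 → F44 := fun Φ => r1 (r2 (r1 (r2 (r1 (r0 (r1 (r2 Φ)))))))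

/-!
Every connection `rᵢ` acts on the square coordinate by a translation that depends only on the
flag type `(s, t)`, so any word in them commutes with the translations of the torus; identities
between words and the facet displacement of `η` are therefore determined by the 8 flags of the
square at the origin. Since the `rᵢ` are involutions with `(r₀r₂)² = (r₁r₂)⁴ = 1`, we have
`r₂r₁r₂r₁ = r₁r₂r₁r₂`, hence `η = r₂r₁r₀r₂r₁r₂ = r₂r₁r₂r₀r₁r₂`, a palindrome in involutions,
which makes `η` an involution.
-/

def etaWord {α : Type*} (r0 r1 r2 : α → α) : α → α :=
  fun x => r1 (r2 (r1 (r2 (r1 (r0 (r1 (r2 x)))))))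

theorem etaWord_involutive {α : Type*} {r0 r1 r2 : α → α} (h0 : Function.Involutive r0)
    (h1 : Function.Involutive r1) (h2 : Function.Involutive r2)
    (h02 : ∀ x, r0 (r2 x) = r2 (r0 x))
    (h12 : ∀ x, r1 (r2 (r1 (r2 (r1 (r2 (r1 (r2 x))))))) = x) :
    Function.Involutive (etaWord r0 r1 r2) := by
  have braid : ∀ x, r1 (r2 (r1 (r2 x))) = r2 (r1 (r2 (r1 x))) := fun x => by
    simpa only [h1 _, h2 _] using h12 (r2 (r1 (r2 (r1 x))))
  have palindrome : ∀ x, etaWord r0 r1 r2 x = r2 (r1 (r2 (r0 (r1 (r2 x))))) := fun x => by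
    simp only [etaWord, braid, h1 _]
  intro x
  conv_lhs => rw [palindrome, palindrome, ← h02 (r1 (r2 x))]
  simp only [h0 _, h1 _, h2 _]

section TranslationEquivariant

variable {P X : Type*} [AddGroup P]

def IsTranslationEquivariant (f : P × X → P × X) : Prop :=
  ∀ q p x, f (q + p, x) = (q + (f (p, x)).1, (f (p, x)).2)

namespace IsTranslationEquivariant

variable {f g : P × X → P × X}

theorem id : IsTranslationEquivariant (id : P × X → P × X) := fun _ _ _ => rfl

theorem comp (hf : IsTranslationEquivariant f) (hg : IsTranslationEquivariant g) :
    IsTranslationEquivariant (f ∘ g) := by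
  intro q p x
  simp only [Function.comp_apply, hg q p x, hf q]

theorem apply_eq (hf : IsTranslationEquivariant f) (p : P) (x : X) :
    f (p, x) = (p + (f (0, x)).1, (f (0, x)).2) := by
  simpa only [add_zero] using hf p 0 x

theorem ext_zero (hf : IsTranslationEquivariant f) (hg : IsTranslationEquivariant g)
    (h : ∀ x, f (0, x) = g (0, x)) : f = g := by
  funext ⟨p, x⟩
  rw [hf.apply_eq, hg.apply_eq, h]

theorem fst_ne_fst (hf : IsTranslationEquivariant f) {x y : X}
    (h : (f (0, x)).1 ≠ (f (0, y)).1) (p : P) : (f (p, x)).1 ≠ (f (p, y)).1 := by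
  rwa [hf.apply_eq, hf.apply_eq p y, Ne, add_right_inj]

end IsTranslationEquivariant

end TranslationEquivariant

theorem r0_equivariant : IsTranslationEquivariant (P := ZMod 8 × ZMod 8) r0 := by rintro q p ⟨s, t⟩; simp [r0]
theorem r1_equivariant : IsTranslationEquivariant (P := ZMod 8 × ZMod 8) r1 := by rintro q p ⟨s, t⟩; simp [r1]
theorem r2_equivariant : IsTranslationEquivariant (P := ZMod 8 × ZMod 8) r2 := by
  rintro q p ⟨s, t⟩; simp [r2, add_assoc]

theorem eta_equivariant : IsTranslationEquivariant (P := ZMod 8 × ZMod 8) eta :=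
  r1_equivariant.comp <| r2_equivariant.comp <| r1_equivariant.comp <| r2_equivariant.comp <|
    r1_equivariant.comp <| r0_equivariant.comp <| r1_equivariant.comp r2_equivariant

theorem r0_involutive : Function.Involutive r0 :=
  congrFun <| (r0_equivariant.comp r0_equivariant).ext_zero .id (by decide)

theorem r1_involutive : Function.Involutive r1 :=
  congrFun <| (r1_equivariant.comp r1_equivariant).ext_zero .id (by decide)

theorem r2_involutive : Function.Involutive r2 :=
  congrFun <| (r2_equivariant.comp r2_equivariant).ext_zero .id (by decide)

theorem r0_r2_comm (Φ : F44) : r0 (r2 Φ) = r2 (r0 Φ) :=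
  congrFun ((r0_equivariant.comp r2_equivariant).ext_zero
    (r2_equivariant.comp r0_equivariant) (by decide)) Φ

theorem r1_r2_pow_four (Φ : F44) : r1 (r2 (r1 (r2 (r1 (r2 (r1 (r2 Φ))))))) = Φ := by
  have hr := r1_equivariant.comp r2_equivariant
  exact congrFun ((hr.comp <| hr.comp <| hr.comp hr).ext_zero .id (by decide)) Φ

/-- In the torus map `{4,4}_{(8,0)}`, the monodromy `η = r₂r₁r₀r₁r₂r₁r₂r₁` is
an involution, and it maps the 8 flags of any facet (square face, i.e. flags
sharing the first coordinate) to 8 pairwise distinct facets. -/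
theorem stmt18 :
    (∀ Φ : F44, eta (eta Φ) = Φ) ∧
    (∀ Φ Ψ : F44, Φ.1 = Ψ.1 → Φ ≠ Ψ → (eta Φ).1 ≠ (eta Ψ).1) := by
  refine ⟨etaWord_involutive r0_involutive r1_involutive r2_involutive r0_r2_comm r1_r2_pow_four,
    ?_⟩
  rintro ⟨p, x⟩ ⟨q, y⟩ (rfl : p = q) hne
  have hxy : x ≠ y := fun h => hne (h ▸ rfl)
  have facets_at_origin : ∀ x y : ZMod 4 × ZMod 2, x ≠ y → (eta (0, x)).1 ≠ (eta (0, y)).1 := by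
    decide
  exact eta_equivariant.fst_ne_fst (facets_at_origin x y hxy) p
end

section
/- Let X be a connected graph with spanning tree T and base vertex x. For each dart d of X not in T, let C_d be the closed path at x that goes from x to I(d) in T, traverses d, and returns from T(d) to x in T. Then the fundamental group Π^x(X) is generated by the homotopy classes {C_d : d a dart not in T}. -/
/-- A graph given by darts with an inversion involution (semi-edges are fixed
points) and incidence maps `i` (initial vertex) and `t` (terminal vertex). -/
structure DGraph where
  V : Type
  D : Type
  inv : D → D
  inv_inv : ∀ d, inv (inv d) = d
  i : D → V
  t : D → V
  i_inv : ∀ d, i (inv d) = t d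

/-- `W` is a path from `u` to `v`: consecutive darts are composable, the first
dart starts at `u` and the last ends at `v`; the empty path requires `u = v`. -/
def DGraph.IsPath (G : DGraph) (u v : G.V) (W : List G.D) : Prop :=
  W.Chain' (fun a b => G.t a = G.i b) ∧
  (match W with
   | [] => u = v
   | d :: _ => G.i d = u) ∧
  (match W.getLast? with
   | none => u = v
   | some d => G.t d = v)

/-- The paths from `u` to `v`. -/
def DGraph.PathsBetween (G : DGraph) (u v : G.V) := {W : List G.D // G.IsPath u v W}

/-- `W'` is obtained from `W` by inserting a consecutive pair of mutually
inverse darts somewhere. -/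
def DGraph.InsertStep (G : DGraph) (W W' : List G.D) : Prop :=
  ∃ (L₁ L₂ : List G.D) (d : G.D), W = L₁ ++ L₂ ∧ W' = L₁ ++ d :: G.inv d :: L₂

/-- Homotopy of paths with the same endpoints: the equivalence relation
generated by insertions (and hence deletions, by symmetry) of consecutive
pairs of mutually inverse darts. -/
def DGraph.Homotopic (G : DGraph) (u v : G.V) (W W' : G.PathsBetween u v) : Prop :=
  Relation.EqvGen (fun A B => G.InsertStep A.1 B.1) W W'

/-- A path is reduced if it has no two consecutive mutually inverse darts. -/
def DGraph.Reduced (G : DGraph) (W : List G.D) : Prop :=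
  W.Chain' (fun a b => b ≠ G.inv a)

/-- Words in the generators `{C_d : d ∉ T}` and their inverses: concatenations
of the distinguished closed paths `C d` (for darts `d` outside the spanning
tree `T`) and of their reverse-inverses. -/
inductive GenWord (G : DGraph) (T : Set G.D) (C : G.D → List G.D) : List G.D → Prop
  | nil : GenWord G T C []
  | app (d : G.D) (hd : d ∉ T) {L : List G.D} :
      GenWord G T C L → GenWord G T C (C d ++ L)
  | appInv (d : G.D) (hd : d ∉ T) {L : List G.D} :
      GenWord G T C L → GenWord G T C ((C d).reverse.map G.inv ++ L)

namespace DGraph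
variable {G : DGraph}

lemma isPath_nil {u v : G.V} : G.IsPath u v [] ↔ u = v := by
  simp [IsPath, List.Chain']

lemma isPath_cons {u v : G.V} {d : G.D} {W : List G.D} :
    G.IsPath u v (d :: W) ↔ G.i d = u ∧ G.IsPath (G.t d) v W := by
  cases W with
  | nil => simp [IsPath, List.Chain']
  | cons e W => simp [IsPath, List.Chain', List.isChain_cons_cons]; tauto

lemma isPath_append {u v w : G.V} {A B : List G.D}
    (hA : G.IsPath u v A) (hB : G.IsPath v w B) : G.IsPath u w (A ++ B) := by
  induction A generalizing u with
  | nil => rw [isPath_nil] at hA; subst hA; exact hB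
  | cons d A ih =>
    rw [isPath_cons] at hA; rw [List.cons_append, isPath_cons]
    exact ⟨hA.1, ih hA.2⟩

lemma isPath_append_iff {u w : G.V} {A B : List G.D} :
    G.IsPath u w (A ++ B) ↔ ∃ v, G.IsPath u v A ∧ G.IsPath v w B := by
  constructor
  · intro h
    induction A generalizing u with
    | nil => exact ⟨u, isPath_nil.mpr rfl, h⟩
    | cons d A ih =>
      rw [List.cons_append, isPath_cons] at h
      obtain ⟨v, h1, h2⟩ := ih h.2
      exact ⟨v, isPath_cons.mpr ⟨h.1, h1⟩, h2⟩
  · rintro ⟨v, h1, h2⟩; exact isPath_append h1 h2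


lemma isPath_delete {u w : G.V} {L₁ L₂ : List G.D} {d : G.D}
    (h : G.IsPath u w (L₁ ++ d :: G.inv d :: L₂)) : G.IsPath u w (L₁ ++ L₂) := by
  obtain ⟨v, h1, h2⟩ := isPath_append_iff.mp h
  rw [isPath_cons, isPath_cons] at h2
  have ht : G.t (G.inv d) = G.i d := by
    have := G.i_inv (G.inv d); rw [G.inv_inv] at this; exact this.symm
  refine isPath_append h1 ?_
  have := h2.2.2
  rw [ht, h2.1] at this
  exact this

lemma homotopic_of_eq {u v : G.V} {A B : G.PathsBetween u v} (h : A.1 = B.1) :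
    G.Homotopic u v A B := by
  cases A; cases B
  cases Subtype.ext h
  exact Relation.EqvGen.refl _

lemma homotopic_del {u v : G.V} {L₁ L₂ : List G.D} {d : G.D}
    (h : G.IsPath u v (L₁ ++ d :: G.inv d :: L₂)) (h' : G.IsPath u v (L₁ ++ L₂)) :
    G.Homotopic u v ⟨_, h⟩ ⟨_, h'⟩ :=
  Relation.EqvGen.symm _ _ (Relation.EqvGen.rel _ _ ⟨L₁, L₂, d, rfl, rfl⟩)

lemma homotopic_congr {v w : G.V} {A B : G.PathsBetween v w} {u y : G.V}
    {Z Y : List G.D} (hZ : G.IsPath u v Z) (hY : G.IsPath w y Y)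
    (h : G.Homotopic v w A B) :
    G.Homotopic u y ⟨Z ++ A.1 ++ Y, isPath_append (isPath_append hZ A.2) hY⟩
      ⟨Z ++ B.1 ++ Y, isPath_append (isPath_append hZ B.2) hY⟩ := by
  induction h with
  | rel M N hMN =>
    refine Relation.EqvGen.rel _ _ ?_
    obtain ⟨L₁, L₂, d, h1, h2⟩ := hMN
    exact ⟨Z ++ L₁, L₂ ++ Y, d, by simp [h1], by simp [h2]⟩
  | refl M => exact Relation.EqvGen.refl _
  | symm _ _ _ ih => exact Relation.EqvGen.symm _ _ ih
  | trans _ _ _ _ _ ih1 ih2 => exact Relation.EqvGen.trans _ _ _ ih1 ih2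

lemma exists_pair_of_not_reduced {A : List G.D} (h : ¬ G.Reduced A) :
    ∃ (L₁ : List G.D) (d : G.D) (L₂ : List G.D), A = L₁ ++ d :: G.inv d :: L₂ := by
  induction A with
  | nil => exact absurd List.isChain_nil h
  | cons a A ih =>
    cases A with
    | nil => exact absurd (List.isChain_singleton a) h
    | cons b A' =>
      rw [Reduced, List.Chain', List.isChain_cons_cons] at h
      push_neg at h
      by_cases hb : b = G.inv a
      · exact ⟨[], a, A', by rw [hb]; rfl⟩
      · obtain ⟨L₁, d, L₂, hL⟩ := ih (h hb)
        exact ⟨a :: L₁, d, L₂, by rw [hL]; rfl⟩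


lemma homotopic_trans {u v : G.V} {A B C : G.PathsBetween u v}
    (h1 : G.Homotopic u v A B) (h2 : G.Homotopic u v B C) : G.Homotopic u v A C :=
  Relation.EqvGen.trans _ _ _ h1 h2

lemma homotopic_symm {u v : G.V} {A B : G.PathsBetween u v}
    (h : G.Homotopic u v A B) : G.Homotopic u v B A :=
  Relation.EqvGen.symm _ _ h

lemma homotopic_cast {u v : G.V} {A B A' B' : G.PathsBetween u v}
    (hA : A.1 = A'.1) (hB : B.1 = B'.1) (h : G.Homotopic u v A B) :
    G.Homotopic u v A' B' :=
  Relation.EqvGen.trans _ _ _ (homotopic_of_eq hA.symm)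
    (Relation.EqvGen.trans _ _ _ h (homotopic_of_eq hB))

lemma homotopic_tree {T : Set G.D}
    (htree : ∀ u v : G.V, ∃! W : List G.D,
      G.IsPath u v W ∧ (∀ d ∈ W, d ∈ T) ∧ G.Reduced W) :
    ∀ (n : ℕ) (A : List G.D), A.length ≤ n → ∀ (u v : G.V) (hA : G.IsPath u v A),
      (∀ d ∈ A, d ∈ T) → ∀ (R : List G.D) (hR : G.IsPath u v R),
      (∀ d ∈ R, d ∈ T) → G.Reduced R →
      G.Homotopic u v ⟨A, hA⟩ ⟨R, hR⟩ := by
  intro n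
  induction n with
  | zero =>
    intro A hlen u v hA hT R hR hRT hRr
    have hAnil : A = [] := List.eq_nil_of_length_eq_zero (Nat.le_zero.mp hlen)
    subst hAnil
    obtain ⟨W₀, _, hu⟩ := htree u v
    refine homotopic_of_eq ?_
    show ([] : List G.D) = R
    rw [show ([] : List G.D) = W₀ from hu [] ⟨hA, hT, List.isChain_nil⟩,
        hu R ⟨hR, hRT, hRr⟩]
  | succ n ih =>
    intro A hlen u v hA hT R hR hRT hRr
    by_cases hred : G.Reduced A
    · obtain ⟨W₀, _, hu⟩ := htree u v
      refine homotopic_of_eq ?_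
      show A = R
      rw [hu A ⟨hA, hT, hred⟩, hu R ⟨hR, hRT, hRr⟩]
    · obtain ⟨L₁, d, L₂, hd⟩ := exists_pair_of_not_reduced hred
      subst hd
      have hA' : G.IsPath u v (L₁ ++ L₂) := isPath_delete hA
      have hlen' : (L₁ ++ L₂).length ≤ n := by
        simp only [List.length_append, List.length_cons] at hlen ⊢
        omega
      refine homotopic_trans (homotopic_del hA hA') ?_
      refine ih _ hlen' u v hA' (fun e he => hT e ?_) R hR hRT hRr
      simp only [List.mem_append, List.mem_cons] at he ⊢
      tauto


lemma main_aux {T : Set G.D} {x : G.V}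
    (htree : ∀ u v : G.V, ∃! W : List G.D,
      G.IsPath u v W ∧ (∀ d ∈ W, d ∈ T) ∧ G.Reduced W)
    (C : G.D → List G.D)
    (hC : ∀ d ∉ T, ∃ P Q : List G.D,
      G.IsPath x (G.i d) P ∧ (∀ e ∈ P, e ∈ T) ∧ G.Reduced P ∧
      G.IsPath (G.t d) x Q ∧ (∀ e ∈ Q, e ∈ T) ∧ G.Reduced Q ∧
      C d = P ++ d :: Q) :
    ∀ (W : List G.D) (u : G.V) (hW : G.IsPath u x W)
      (P : List G.D) (hP : G.IsPath x u P), (∀ d ∈ P, d ∈ T) → G.Reduced P →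
      ∃ (W' : List G.D) (hW' : G.IsPath x x W'),
        GenWord G T C W' ∧
          G.Homotopic x x ⟨P ++ W, isPath_append hP hW⟩ ⟨W', hW'⟩ := by
  intro W
  induction W with
  | nil =>
    intro u hW P hP hPT hPr
    have hu : u = x := isPath_nil.mp hW
    subst hu
    refine ⟨[], isPath_nil.mpr rfl, GenWord.nil, ?_⟩
    exact homotopic_tree htree (P ++ []).length _ le_rfl _ _ _
      (by simpa using hPT) [] (isPath_nil.mpr rfl) (by simp) List.isChain_nil
  | cons d W ih =>
    intro u hW P hP hPT hPr
    rw [isPath_cons] at hW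
    obtain ⟨Q₀, ⟨hQ₀p, hQ₀T, hQ₀r⟩, hQ₀u⟩ := htree x (G.t d)
    obtain ⟨W'', hW'', hgen, hhom⟩ := ih (G.t d) hW.2 Q₀ hQ₀p hQ₀T hQ₀r
    have hPd : G.IsPath x (G.t d) (P ++ [d]) :=
      isPath_append hP (isPath_cons.mpr ⟨hW.1, isPath_nil.mpr rfl⟩)
    by_cases hdT : d ∈ T
    · refine ⟨W'', hW'', hgen, ?_⟩
      have hPdT : ∀ e ∈ P ++ [d], e ∈ T := by
        intro e he
        rcases List.mem_append.mp he with h | h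
        · exact hPT e h
        · simp at h; subst h; exact hdT
      have h1 : G.Homotopic x (G.t d) ⟨P ++ [d], hPd⟩ ⟨Q₀, hQ₀p⟩ :=
        homotopic_tree htree (P ++ [d]).length _ le_rfl _ _ hPd hPdT Q₀ hQ₀p hQ₀T hQ₀r
      have h2 := homotopic_congr (isPath_nil.mpr rfl : G.IsPath x x []) hW.2 h1
      refine homotopic_trans (homotopic_cast (A' := ⟨P ++ d :: W, _⟩)
        (B' := ⟨Q₀ ++ W, isPath_append hQ₀p hW.2⟩) (by simp) (by simp) h2) hhom
    · obtain ⟨P', Q', hP'p, hP'T, hP'r, hQ'p, hQ'T, hQ'r, hCd⟩ := hC d hdT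
      have hPP' : P = P' := by
        obtain ⟨W₀, _, hu⟩ := htree x u
        rw [hW.1] at hP'p
        rw [hu P ⟨hP, hPT, hPr⟩, hu P' ⟨hP'p, hP'T, hP'r⟩]
      have hQQ : G.IsPath (G.t d) (G.t d) (Q' ++ Q₀) := isPath_append hQ'p hQ₀p
      have hQQT : ∀ e ∈ Q' ++ Q₀, e ∈ T := by
        intro e he
        rcases List.mem_append.mp he with h | h
        · exact hQ'T e h
        · exact hQ₀T e h
      have h0 : G.Homotopic (G.t d) (G.t d) ⟨Q' ++ Q₀, hQQ⟩ ⟨[], isPath_nil.mpr rfl⟩ :=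
        homotopic_tree htree (Q' ++ Q₀).length _ le_rfl _ _ hQQ hQQT []
          (isPath_nil.mpr rfl) (by simp) List.isChain_nil
      have hCdpath : G.IsPath x x (C d) := by
        rw [hCd]
        exact isPath_append hP'p (isPath_cons.mpr ⟨rfl, hQ'p⟩)
      have h2 := homotopic_congr hPd hW.2 (homotopic_symm h0)
      have h3 := homotopic_congr hCdpath (isPath_nil.mpr rfl : G.IsPath x x []) hhom
      refine ⟨C d ++ W'', isPath_append hCdpath hW'', GenWord.app d hdT hgen, ?_⟩
      refine homotopic_trans (homotopic_cast (A' := ⟨P ++ d :: W, _⟩)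
        (B' := ⟨C d ++ (Q₀ ++ W) ++ [], isPath_append (isPath_append hCdpath (isPath_append hQ₀p hW.2)) (isPath_nil.mpr rfl)⟩)
        (by simp) (by simp [hCd, hPP']) h2) ?_
      exact homotopic_cast (A' := ⟨C d ++ (Q₀ ++ W) ++ [], _⟩)
        (B' := ⟨C d ++ W'', isPath_append hCdpath hW''⟩) rfl (by simp) h3

end DGraph

/-- Let `T` be a spanning tree of a connected graph `G` (closed under dart
inversion, with a unique reduced path inside `T` between any two vertices) and
`x` a base vertex. For each dart `d ∉ T` let `C d` be the closed path at `x`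
going to `i d` inside `T`, traversing `d`, and returning from `t d` to `x`
inside `T`. Then the fundamental group `Π^x(G)` is generated by the homotopy
classes of the `C d`: every closed path at `x` is homotopic to a word in the
`C d` and their inverses. -/
theorem stmt19 (G : DGraph) (T : Set G.D) (x : G.V)
    (hTinv : ∀ d ∈ T, G.inv d ∈ T)
    (htree : ∀ u v : G.V,
      ∃! W : List G.D, G.IsPath u v W ∧ (∀ d ∈ W, d ∈ T) ∧ G.Reduced W)
    (C : G.D → List G.D)
    (hC : ∀ d ∉ T, ∃ P Q : List G.D,
      G.IsPath x (G.i d) P ∧ (∀ e ∈ P, e ∈ T) ∧ G.Reduced P ∧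
      G.IsPath (G.t d) x Q ∧ (∀ e ∈ Q, e ∈ T) ∧ G.Reduced Q ∧
      C d = P ++ d :: Q) :
    ∀ (W : List G.D) (hW : G.IsPath x x W),
      ∃ (W' : List G.D) (hW' : G.IsPath x x W'),
        GenWord G T C W' ∧ G.Homotopic x x ⟨W, hW⟩ ⟨W', hW'⟩ := by
  intro W hW
  obtain ⟨W', hW', hgen, hhom⟩ := DGraph.main_aux htree C hC W x hW []
    (DGraph.isPath_nil.mpr rfl) (by simp) List.isChain_nil
  exact ⟨W', hW', hgen, DGraph.homotopic_trans (DGraph.homotopic_of_eq rfl) hhom⟩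
end
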